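/- arXiv:2307.14282 — 2 statements merged into one kernel-verified Lean document; each statement's English description precedes it below -/
import Mathlib

section
/- Monotonicity of trimming bounds: for a continuous real random variable Y with quantile function F⁻¹, the lower-tail trimmed mean δ ↦ E[Y | Y < F⁻¹(δ)] is nondecreasing in δ on (0,1), and the upper-tail trimmed mean δ ↦ E[Y | Y > F⁻¹(1−δ)] is nonincreasing in δ on (0,1). Consequently, if 0 < δ̄ ≤ δ, the bounds computed at δ̄ contain the bounds computed at δ. -/
open MeasureTheory Set

/-- Conditional mean of `Y` on the event `A`. -/
noncomputable def condMean {Ω : Type*} [MeasurableSpace Ω] (μ : Measure Ω)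
    (Y : Ω → ℝ) (A : Set Ω) : ℝ :=
  (∫ ω in A, Y ω ∂μ) / (μ A).toReal

/-- Quantile function `F⁻¹(u) = inf {y : P(Y ≤ y) ≥ u}`. -/
noncomputable def quantileFn {Ω : Type*} [MeasurableSpace Ω] (μ : Measure Ω)
    (Y : Ω → ℝ) (u : ℝ) : ℝ :=
  sInf {y : ℝ | u ≤ (μ {ω | Y ω ≤ y}).toReal}

/-- Lower-tail trimmed mean `E[Y | Y < F⁻¹(δ)]`. -/
noncomputable def lowerTrim {Ω : Type*} [MeasurableSpace Ω] (μ : Measure Ω)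
    (Y : Ω → ℝ) (δ : ℝ) : ℝ :=
  condMean μ Y {ω | Y ω < quantileFn μ Y δ}

/-- Upper-tail trimmed mean `E[Y | Y > F⁻¹(1−δ)]`. -/
noncomputable def upperTrim {Ω : Type*} [MeasurableSpace Ω] (μ : Measure Ω)
    (Y : Ω → ℝ) (δ : ℝ) : ℝ :=
  condMean μ Y {ω | quantileFn μ Y (1 - δ) < Y ω}

/-!
For an atomless distribution the event `{Y < F⁻¹(δ)}` has probability exactly `δ`, and it grows
with `δ`. Enlarging `δ₁` to `δ₂` adds to the event only outcomes with `Y ≥ F⁻¹(δ₁)`, while on the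
old event `Y < F⁻¹(δ₁)`; averaging in larger values cannot lower the mean. The upper tail is the
mirror image, obtained by applying this to `-Y`.
-/

open ProbabilityTheory

section CondMean

variable {Ω : Type*} [MeasurableSpace Ω] {μ : Measure Ω} {Y : Ω → ℝ} {A B : Set Ω} {c : ℝ}

lemma condMean_neg : condMean μ (-Y) A = -condMean μ Y A := by
  simp only [condMean, Pi.neg_apply, integral_neg, neg_div]

variable [IsFiniteMeasure μ]

lemma condMean_le_condMean_of_le_sdiff (hYi : Integrable Y μ) (hA : MeasurableSet A)
    (hB : MeasurableSet B) (hAB : A ⊆ B) (hA0 : μ A ≠ 0) (hYA : ∀ ω ∈ A, Y ω ≤ c)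
    (hYBA : ∀ ω ∈ B \ A, c ≤ Y ω) :
    condMean μ Y A ≤ condMean μ Y B := by
  have ha : 0 < μ.real A := ENNReal.toReal_pos hA0 (measure_ne_top μ A)
  have hba : μ.real (B \ A) = μ.real B - μ.real A := measureReal_sdiff hAB hA
  have hsplit : ∫ ω in B, Y ω ∂μ = (∫ ω in A, Y ω ∂μ) + ∫ ω in B \ A, Y ω ∂μ := by
    rw [← setIntegral_union disjoint_sdiff_self_right (hB.diff hA) hYi.integrableOn
      hYi.integrableOn, union_sdiff_cancel hAB]
  have hI : ∫ ω in A, Y ω ∂μ ≤ μ.real A * c := by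
    simpa using setIntegral_mono_on hYi.integrableOn (integrableOn_const (C := c)) hA hYA
  have hJ : μ.real (B \ A) * c ≤ ∫ ω in B \ A, Y ω ∂μ := by
    simpa using setIntegral_mono_on (integrableOn_const (C := c)) hYi.integrableOn
      (hB.diff hA) hYBA
  have hBA : 0 ≤ μ.real (B \ A) := measureReal_nonneg
  rw [hba] at hJ hBA
  rw [condMean, condMean, ← measureReal_def, ← measureReal_def, hsplit,
    div_le_div_iff₀ ha (by linarith)]
  -- `∫_A Y · (μ B - μ A) ≤ c · μ A · (μ B - μ A) ≤ ∫_{B \ A} Y · μ A`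
  nlinarith [mul_le_mul_of_nonneg_left hI hBA, mul_le_mul_of_nonneg_left hJ ha.le]

lemma condMean_le_condMean_of_sdiff_le (hYi : Integrable Y μ) (hA : MeasurableSet A)
    (hB : MeasurableSet B) (hAB : A ⊆ B) (hA0 : μ A ≠ 0) (hYA : ∀ ω ∈ A, c ≤ Y ω)
    (hYBA : ∀ ω ∈ B \ A, Y ω ≤ c) :
    condMean μ Y B ≤ condMean μ Y A := by
  have := condMean_le_condMean_of_le_sdiff (c := -c) hYi.neg hA hB hAB hA0
    (fun ω hω => neg_le_neg (hYA ω hω)) (fun ω hω => neg_le_neg (hYBA ω hω))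
  rwa [condMean_neg, condMean_neg, neg_le_neg_iff] at this

end CondMean

namespace ProbabilityTheory

variable {ν : Measure ℝ} {u : ℝ}

lemma nonempty_setOf_le_cdf (hu : u < 1) : {y | u ≤ cdf ν y}.Nonempty :=
  let ⟨y, hy⟩ := ((tendsto_cdf_atTop ν).eventually (eventually_gt_nhds hu)).exists
  ⟨y, hy.le⟩

lemma bddBelow_setOf_le_cdf (hu : 0 < u) : BddBelow {y | u ≤ cdf ν y} := by
  obtain ⟨y₀, hy₀⟩ := ((tendsto_cdf_atBot ν).eventually (eventually_lt_nhds hu)).exists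
  refine ⟨y₀, fun y hy => ?_⟩
  by_contra! h
  exact (hy.trans (monotone_cdf ν h.le)).not_gt hy₀

lemma le_cdf_sInf_setOf_le_cdf (hu : u < 1) : u ≤ cdf ν (sInf {y | u ≤ cdf ν y}) := by
  rw [← StieltjesFunction.iInf_Ioi_eq]
  refine le_ciInf fun ⟨r, hr⟩ => ?_
  obtain ⟨s, hs, hsr⟩ := exists_lt_of_csInf_lt (nonempty_setOf_le_cdf hu) hr
  exact hs.trans (monotone_cdf ν hsr.le)

lemma leftLim_cdf [IsProbabilityMeasure ν] [NullSingletonClass ν] (x : ℝ) :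
    Function.leftLim (cdf ν) x = cdf ν x := by
  have h := (cdf ν).measure_singleton x
  rw [measure_cdf, measure_singleton, eq_comm, ENNReal.ofReal_eq_zero] at h
  exact le_antisymm ((monotone_cdf ν).leftLim_le le_rfl) (by linarith)

lemma cdf_sInf_setOf_le_cdf [IsProbabilityMeasure ν] [NullSingletonClass ν] (hu0 : 0 < u)
    (hu1 : u < 1) : cdf ν (sInf {y | u ≤ cdf ν y}) = u := by
  refine le_antisymm ?_ (le_cdf_sInf_setOf_le_cdf hu1)
  rw [← leftLim_cdf]
  refine le_of_tendsto ((monotone_cdf ν).tendsto_leftLim _) ?_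
  filter_upwards [self_mem_nhdsWithin] with y (hy : y < _)
  by_contra! h
  exact (csInf_le (bddBelow_setOf_le_cdf hu0) h.le).not_gt hy

end ProbabilityTheory

section Quantile

variable {Ω : Type*} [MeasurableSpace Ω] {μ : Measure Ω} {Y : Ω → ℝ} {u : ℝ}

lemma nullSingletonClass_map (hYm : Measurable Y) (hcont : ∀ y : ℝ, μ {ω | Y ω = y} = 0) :
    NullSingletonClass (μ.map Y) :=
  ⟨fun y => by rw [Measure.map_apply hYm (measurableSet_singleton y)]; exact hcont y⟩

variable [IsProbabilityMeasure μ]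

lemma quantileFn_eq_sInf_setOf_le_cdf_map (hYm : Measurable Y) (u : ℝ) :
    quantileFn μ Y u = sInf {y | u ≤ cdf (μ.map Y) y} := by
  have := Measure.isProbabilityMeasure_map (μ := μ) hYm.aemeasurable
  simp only [quantileFn, cdf_eq_real, measureReal_def, Measure.map_apply hYm measurableSet_Iic]
  rfl

lemma quantileFn_mono {δ₁ δ₂ : ℝ} (hYm : Measurable Y) (h0 : 0 < δ₁) (h12 : δ₁ ≤ δ₂)
    (h1 : δ₂ < 1) : quantileFn μ Y δ₁ ≤ quantileFn μ Y δ₂ := by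
  rw [quantileFn_eq_sInf_setOf_le_cdf_map hYm, quantileFn_eq_sInf_setOf_le_cdf_map hYm]
  exact csInf_le_csInf (bddBelow_setOf_le_cdf h0) (nonempty_setOf_le_cdf h1)
    fun y hy => h12.trans hy

lemma map_measure_Iic_quantileFn (hYm : Measurable Y) (hcont : ∀ y : ℝ, μ {ω | Y ω = y} = 0)
    (hu0 : 0 < u) (hu1 : u < 1) : μ.map Y (Iic (quantileFn μ Y u)) = ENNReal.ofReal u := by
  have := Measure.isProbabilityMeasure_map (μ := μ) hYm.aemeasurable
  have := nullSingletonClass_map hYm hcont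
  rw [← ofReal_cdf, quantileFn_eq_sInf_setOf_le_cdf_map hYm, cdf_sInf_setOf_le_cdf hu0 hu1]

lemma measure_lt_quantileFn (hYm : Measurable Y) (hcont : ∀ y : ℝ, μ {ω | Y ω = y} = 0)
    (hu0 : 0 < u) (hu1 : u < 1) : μ {ω | Y ω < quantileFn μ Y u} = ENNReal.ofReal u := by
  have := nullSingletonClass_map hYm hcont
  calc μ {ω | Y ω < quantileFn μ Y u} = μ.map Y (Iio (quantileFn μ Y u)) :=
        (Measure.map_apply hYm measurableSet_Iio).symm
    _ = μ.map Y (Iic (quantileFn μ Y u)) := measure_congr Iio_ae_eq_Iic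
    _ = ENNReal.ofReal u := map_measure_Iic_quantileFn hYm hcont hu0 hu1

lemma measure_quantileFn_lt (hYm : Measurable Y) (hcont : ∀ y : ℝ, μ {ω | Y ω = y} = 0)
    (hu0 : 0 < u) (hu1 : u < 1) : μ {ω | quantileFn μ Y u < Y ω} = ENNReal.ofReal (1 - u) := by
  have := Measure.isProbabilityMeasure_map (μ := μ) hYm.aemeasurable
  calc μ {ω | quantileFn μ Y u < Y ω} = μ.map Y (Iic (quantileFn μ Y u))ᶜ := by
        rw [compl_Iic, Measure.map_apply hYm measurableSet_Ioi]; rfl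
    _ = ENNReal.ofReal (1 - u) := by
        rw [prob_compl_eq_one_sub measurableSet_Iic, map_measure_Iic_quantileFn hYm hcont hu0 hu1,
          ENNReal.ofReal_sub _ hu0.le, ENNReal.ofReal_one]

end Quantile

section Trim

variable {Ω : Type*} [MeasurableSpace Ω] {μ : Measure Ω} [IsProbabilityMeasure μ] {Y : Ω → ℝ}
  {δ₁ δ₂ : ℝ}

lemma lowerTrim_le_lowerTrim (hYm : Measurable Y) (hYi : Integrable Y μ)
    (hcont : ∀ y : ℝ, μ {ω | Y ω = y} = 0) (h0 : 0 < δ₁) (h12 : δ₁ ≤ δ₂) (h1 : δ₂ < 1) :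
    lowerTrim μ Y δ₁ ≤ lowerTrim μ Y δ₂ := by
  have hq := quantileFn_mono (μ := μ) hYm h0 h12 h1
  refine condMean_le_condMean_of_le_sdiff (c := quantileFn μ Y δ₁) hYi
    (measurableSet_lt hYm measurable_const) (measurableSet_lt hYm measurable_const)
    (fun ω hω => lt_of_lt_of_le hω hq) ?_ (fun ω hω => le_of_lt hω) (fun ω hω => not_lt.1 hω.2)
  rw [measure_lt_quantileFn hYm hcont h0 (h12.trans_lt h1)]
  exact (ENNReal.ofReal_pos.2 h0).ne'

lemma upperTrim_le_upperTrim (hYm : Measurable Y) (hYi : Integrable Y μ)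
    (hcont : ∀ y : ℝ, μ {ω | Y ω = y} = 0) (h0 : 0 < δ₁) (h12 : δ₁ ≤ δ₂) (h1 : δ₂ < 1) :
    upperTrim μ Y δ₂ ≤ upperTrim μ Y δ₁ := by
  have hq := quantileFn_mono (μ := μ) hYm (by linarith) (by linarith : 1 - δ₂ ≤ 1 - δ₁)
    (by linarith)
  refine condMean_le_condMean_of_sdiff_le (c := quantileFn μ Y (1 - δ₁)) hYi
    (measurableSet_lt measurable_const hYm) (measurableSet_lt measurable_const hYm)
    (fun ω hω => lt_of_le_of_lt hq hω) ?_ (fun ω hω => le_of_lt hω) (fun ω hω => not_lt.1 hω.2)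
  rw [measure_quantileFn_lt hYm hcont (by linarith) (by linarith), sub_sub_cancel]
  exact (ENNReal.ofReal_pos.2 h0).ne'

end Trim

/-- Monotonicity of the trimming bounds: the lower-tail trimmed mean is nondecreasing
in `δ` on `(0,1)`, the upper-tail trimmed mean is nonincreasing in `δ` on `(0,1)`, and
consequently the interval of bounds computed at `δ̄ ≤ δ` contains the one computed at `δ`. -/
theorem trimmed_mean_monotonicity
    {Ω : Type*} [MeasurableSpace Ω] (μ : Measure Ω) [IsProbabilityMeasure μ]
    (Y : Ω → ℝ) (hYm : Measurable Y) (hYi : Integrable Y μ)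
    (hcont : ∀ y : ℝ, μ {ω | Y ω = y} = 0) :
    (∀ δ₁ δ₂ : ℝ, 0 < δ₁ → δ₁ ≤ δ₂ → δ₂ < 1 →
        lowerTrim μ Y δ₁ ≤ lowerTrim μ Y δ₂) ∧
    (∀ δ₁ δ₂ : ℝ, 0 < δ₁ → δ₁ ≤ δ₂ → δ₂ < 1 →
        upperTrim μ Y δ₂ ≤ upperTrim μ Y δ₁) ∧
    (∀ δbar δ : ℝ, 0 < δbar → δbar ≤ δ → δ < 1 →
        Set.Icc (lowerTrim μ Y δ) (upperTrim μ Y δ) ⊆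
          Set.Icc (lowerTrim μ Y δbar) (upperTrim μ Y δbar)) :=
  ⟨fun _ _ => lowerTrim_le_lowerTrim hYm hYi hcont,
    fun _ _ => upperTrim_le_upperTrim hYm hYi hcont,
    fun _ _ h0 h12 h1 => Icc_subset_Icc (lowerTrim_le_lowerTrim hYm hYi hcont h0 h12 h1)
      (upperTrim_le_upperTrim hYm hYi hcont h0 h12 h1)⟩
end

section
/- Probability reallocation inequalities in the UMAS proof: let P be a ranked list containing d at position n, and let P̃ be P with e in place of d. Under the almost-sure containment {s_d ≥ C_d} ⊆ {s_e ≥ C_e}, the assignment probabilities satisfy: L^P_u = L^{P̃}_u for u < n; L^P_n ≤ L^{P̃}_n; L^P_u ≥ L^{P̃}_u for n < u ≤ |P|; and L^P_0 ≥ L^{P̃}_0. -/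
open MeasureTheory Set

/-- The event that the agent's score at school `j` clears the (random) cutoff. -/
def clearSet {Ω J : Type*} (C : J → Ω → ℝ) (s : J → ℝ) (j : J) : Set Ω :=
  {ω | C j ω ≤ s j}

/-- `L^P_u` for listed positions (0-indexed): the probability that the school in
position `u` of `p` is the lowest-ranked listed school whose cutoff the agent clears. -/
noncomputable def assignProb {Ω J : Type*} [MeasurableSpace Ω] (μ : Measure Ω)
    (C : J → Ω → ℝ) (s : J → ℝ) (d₀ : J) (p : List J) (u : ℕ) : ℝ :=
  (μ ((⋂ v ∈ Finset.range u, (clearSet C s (p.getD v d₀))ᶜ) ∩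
      clearSet C s (p.getD u d₀))).toReal

/-- `L^P_0`: the probability of remaining unassigned. -/
noncomputable def outsideProb {Ω J : Type*} [MeasurableSpace Ω] (μ : Measure Ω)
    (C : J → Ω → ℝ) (s : J → ℝ) (d₀ : J) (p : List J) : ℝ :=
  (μ (⋂ v ∈ Finset.range p.length, (clearSet C s (p.getD v d₀))ᶜ)).toReal

/-!
Replacing `d` by `e` at position `n` changes only the `n`-th term of the sequence of events
`v ↦ {the agent clears the school in position v}`, and enlarges it up to a null set. So the
events before `n` are untouched, first hitting `n` becomes more likely, and everything that
requires a miss at `n` (first hitting a later position, or missing all) becomes less likely.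
-/

section FirstHit

variable {Ω : Type*}

def firstHit (A : ℕ → Set Ω) (u : ℕ) : Set Ω :=
  (⋂ v ∈ Finset.range u, (A v)ᶜ) ∩ A u

variable {A B : ℕ → Set Ω} {n : ℕ}

lemma biInter_range_compl_eq_of_le (hAB : ∀ v ≠ n, A v = B v) {u : ℕ} (hu : u ≤ n) :
    ⋂ v ∈ Finset.range u, (A v)ᶜ = ⋂ v ∈ Finset.range u, (B v)ᶜ :=
  iInter₂_congr fun v hv ↦ by rw [hAB v (Finset.mem_range.mp hv |>.trans_le hu).ne]

lemma firstHit_eq_of_lt (hAB : ∀ v ≠ n, A v = B v) {u : ℕ} (hu : u < n) :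
    firstHit A u = firstHit B u := by
  rw [firstHit, firstHit, biInter_range_compl_eq_of_le hAB hu.le, hAB u hu.ne]

variable [MeasurableSpace Ω] {μ : Measure Ω}

lemma biInter_range_compl_ae_le (h : ∀ v, A v ≤ᵐ[μ] B v) (m : ℕ) :
    ⋂ v ∈ Finset.range m, (B v)ᶜ ≤ᵐ[μ] ⋂ v ∈ Finset.range m, (A v)ᶜ :=
  (Finset.range m).eventuallyLE_iInter fun v _ ↦ (h v).compl

lemma ae_le_of_eq_of_ne (hAB : ∀ v ≠ n, A v = B v) (hn : A n ≤ᵐ[μ] B n) (v : ℕ) :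
    A v ≤ᵐ[μ] B v := by
  rcases eq_or_ne v n with rfl | hv
  · exact hn
  · rw [hAB v hv]
    exact Filter.EventuallyLE.rfl

lemma firstHit_ae_le_self (hAB : ∀ v ≠ n, A v = B v) (hn : A n ≤ᵐ[μ] B n) :
    firstHit A n ≤ᵐ[μ] firstHit B n := by
  rw [firstHit, firstHit, biInter_range_compl_eq_of_le hAB le_rfl]
  exact Filter.EventuallyLE.rfl.inter hn

lemma firstHit_ae_le_of_lt (hAB : ∀ v ≠ n, A v = B v) (hn : A n ≤ᵐ[μ] B n) {u : ℕ}
    (hu : n < u) : firstHit B u ≤ᵐ[μ] firstHit A u := by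
  rw [firstHit, firstHit, hAB u hu.ne']
  exact (biInter_range_compl_ae_le (ae_le_of_eq_of_ne hAB hn) u).inter Filter.EventuallyLE.rfl

end FirstHit

lemma List.getD_map_replace_of_ne {J : Type*} [DecidableEq J] {P : List J} (hP : P.Nodup)
    {d₀ d e : J} {n : ℕ} (hn : n < P.length) (hdn : P.getD n d₀ = d) {v : ℕ} (hv : v ≠ n) :
    (P.map fun x => if x = d then e else x).getD v d₀ = P.getD v d₀ := by
  rcases lt_or_ge v P.length with hvP | hvP
  · have hPv : P[v] ≠ d := by
      rw [← hdn, List.getD_eq_getElem _ _ hn]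
      exact fun h ↦ hv ((hP.getElem_inj_iff).mp h)
    rw [List.getD_eq_getElem _ _ (by simpa using hvP), List.getElem_map, if_neg hPv,
      List.getD_eq_getElem _ _ hvP]
  · rw [List.getD_eq_default _ _ hvP, List.getD_eq_default _ _ (by simpa using hvP)]

lemma List.getD_map_replace_self {J : Type*} [DecidableEq J] {P : List J} {d₀ d e : J}
    {n : ℕ} (hn : n < P.length) (hdn : P.getD n d₀ = d) :
    (P.map fun x => if x = d then e else x).getD n d₀ = e := by
  rw [List.getD_eq_getElem _ _ hn] at hdn
  rw [List.getD_eq_getElem _ _ (by simpa using hn), List.getElem_map, hdn, if_pos rfl]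

theorem umas_probability_reallocation_general
    {Ω J : Type*} [MeasurableSpace Ω] [DecidableEq J]
    (μ : Measure Ω) [IsProbabilityMeasure μ]
    (C : J → Ω → ℝ) (s : J → ℝ) (d₀ : J)
    (P : List J) (hPnd : P.Nodup)
    (d e : J)
    (n : ℕ) (hn : n < P.length) (hdn : P.getD n d₀ = d)
    (hcontain : μ (clearSet C s d \ clearSet C s e) = 0) :
    (∀ u : ℕ, u < n →
        assignProb μ C s d₀ P u =
          assignProb μ C s d₀ (P.map fun x => if x = d then e else x) u) ∧
    (assignProb μ C s d₀ P n ≤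
        assignProb μ C s d₀ (P.map fun x => if x = d then e else x) n) ∧
    (∀ u : ℕ, n < u → u < P.length →
        assignProb μ C s d₀ (P.map fun x => if x = d then e else x) u ≤
          assignProb μ C s d₀ P u) ∧
    (outsideProb μ C s d₀ (P.map fun x => if x = d then e else x) ≤
        outsideProb μ C s d₀ P) := by
  set A : ℕ → Set Ω := fun v ↦ clearSet C s (P.getD v d₀)
  set B : ℕ → Set Ω := fun v ↦ clearSet C s ((P.map fun x => if x = d then e else x).getD v d₀)
  have hAB : ∀ v ≠ n, A v = B v := fun v hv ↦ by
    simp only [A, B, List.getD_map_replace_of_ne hPnd hn hdn hv]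
  have hAn : A n ≤ᵐ[μ] B n := by
    simpa only [A, B, hdn, List.getD_map_replace_self hn hdn] using ae_le_set.mpr hcontain
  have toReal_mono {S T : Set Ω} (h : S ≤ᵐ[μ] T) : (μ S).toReal ≤ (μ T).toReal :=
    ENNReal.toReal_mono (measure_ne_top μ T) (measure_mono_ae h)
  refine ⟨fun u hu ↦ congrArg (fun S ↦ (μ S).toReal) (firstHit_eq_of_lt hAB hu),
    toReal_mono (firstHit_ae_le_self hAB hAn),
    fun u hu _ ↦ toReal_mono (firstHit_ae_le_of_lt hAB hAn hu), ?_⟩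
  simpa only [outsideProb, List.length_map] using
    toReal_mono (biInter_range_compl_ae_le (ae_le_of_eq_of_ne hAB hAn) P.length)

/-- Probability reallocation inequalities in the UMAS proof: if `P` lists `d` at
position `n` and `P̃` is `P` with `e` in place of `d`, then under the almost-sure
containment `{s_d ≥ C_d} ⊆ {s_e ≥ C_e}` we have `L^P_u = L^{P̃}_u` for `u < n`,
`L^P_n ≤ L^{P̃}_n`, `L^P_u ≥ L^{P̃}_u` for `n < u ≤ |P|`, and `L^P_0 ≥ L^{P̃}_0`. -/
theorem umas_probability_reallocation
    {Ω J : Type*} [MeasurableSpace Ω] [DecidableEq J]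
    (μ : Measure Ω) [IsProbabilityMeasure μ]
    (C : J → Ω → ℝ) (s : J → ℝ) (d₀ : J)
    (hmeas : ∀ j : J, MeasurableSet (clearSet C s j))
    (P : List J) (hPnd : P.Nodup)
    (d e : J) (he : e ∉ P)
    (n : ℕ) (hn : n < P.length) (hdn : P.getD n d₀ = d)
    (hcontain : μ (clearSet C s d \ clearSet C s e) = 0) :
    (∀ u : ℕ, u < n →
        assignProb μ C s d₀ P u =
          assignProb μ C s d₀ (P.map fun x => if x = d then e else x) u) ∧
    (assignProb μ C s d₀ P n ≤
        assignProb μ C s d₀ (P.map fun x => if x = d then e else x) n) ∧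
    (∀ u : ℕ, n < u → u < P.length →
        assignProb μ C s d₀ (P.map fun x => if x = d then e else x) u ≤
          assignProb μ C s d₀ P u) ∧
    (outsideProb μ C s d₀ (P.map fun x => if x = d then e else x) ≤
        outsideProb μ C s d₀ P) :=
  umas_probability_reallocation_general μ C s d₀ P hPnd d e n hn hdn hcontain
end
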